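/- Monotonicity of UI under one-way public communication: for any function f on the support of S, UI(S; (Y,f(S)) \ (Z,f(S))) ≤ UI(S; Y \ Z). -/

import Mathlib

open Finset Real

section Defs
variable {α β γ : Type*} [Fintype α] [Fintype β] [Fintype γ]

/-- `p` is a probability distribution on a finite type. -/
def IsDist (p : α → ℝ) : Prop := (∀ a, 0 ≤ p a) ∧ ∑ a, p a = 1

/-- `k` is a channel (stochastic matrix): each row is a distribution. -/
def IsChannel (k : α → β → ℝ) : Prop := ∀ a, IsDist (k a)

/-- Kullback–Leibler divergence (base 2) between distributions on a finite type. -/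
noncomputable def klDiv2 (p q : α → ℝ) : ℝ := ∑ a, p a * Real.logb 2 (p a / q a)

/-- Channel composition: `(chComp lam mu) a c = ∑ b, lam b c * mu a b`. -/
def chComp (lam : β → γ → ℝ) (mu : α → β → ℝ) : α → γ → ℝ :=
  fun a c => ∑ b, lam b c * mu a b

/-- Conditional (weighted) KL divergence `D(k ∥ k' | pi)`. -/
noncomputable def condKL (pi : α → ℝ) (k k' : α → β → ℝ) : ℝ :=
  ∑ a, pi a * klDiv2 (k a) (k' a)

/-- Weighted output deficiency `δ_o^π(μ,κ) = inf_λ D(κ ∥ λ∘μ | π)`. -/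
noncomputable def defOut (pi : α → ℝ) (mu : α → γ → ℝ) (kap : α → β → ℝ) : ℝ :=
  sInf {d | ∃ lam : γ → β → ℝ, IsChannel lam ∧ d = condKL pi kap (chComp lam mu)}

/-- Risk of a fixed strategy `rho` used after observing through channel `nu`. -/
noncomputable def riskWith {S O A : Type*} [Fintype S] [Fintype O] [Fintype A]
    (pi : S → ℝ) (nu : S → O → ℝ) (rho : O → A → ℝ) (l : S → A → ℝ) : ℝ :=
  ∑ s, pi s * ∑ a, chComp rho nu s a * l s a

/-- Optimal Bayes risk `R(π,ν,ℓ)`. -/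
noncomputable def bayesRisk {S O A : Type*} [Fintype S] [Fintype O] [Fintype A]
    (pi : S → ℝ) (nu : S → O → ℝ) (l : S → A → ℝ) : ℝ :=
  sInf {r | ∃ rho : O → A → ℝ, IsChannel rho ∧ r = riskWith pi nu rho l}

/-- Total variation distance between distributions on a finite type. -/
noncomputable def tvDist (p q : α → ℝ) : ℝ := (∑ a, |p a - q a|) / 2

end Defs

section Joint
variable {S Y Z : Type*} [Fintype S] [Fintype Y] [Fintype Z]

noncomputable def margSY (P : S × Y × Z → ℝ) : S × Y → ℝ := fun p => ∑ z, P (p.1, p.2, z)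
noncomputable def margSZ (P : S × Y × Z → ℝ) : S × Z → ℝ := fun p => ∑ y, P (p.1, y, p.2)
noncomputable def margYZ (P : S × Y × Z → ℝ) : Y × Z → ℝ := fun p => ∑ s, P (s, p.1, p.2)
noncomputable def margS (P : S × Y × Z → ℝ) : S → ℝ := fun s => ∑ y, ∑ z, P (s, y, z)
noncomputable def margY (P : S × Y × Z → ℝ) : Y → ℝ := fun y => ∑ s, ∑ z, P (s, y, z)
noncomputable def margZ (P : S × Y × Z → ℝ) : Z → ℝ := fun z => ∑ s, ∑ y, P (s, y, z)

/-- Mutual information `I(S;Y)` (base 2) of the (S,Y)-marginal of `P`. -/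
noncomputable def miSY (P : S × Y × Z → ℝ) : ℝ :=
  ∑ s, ∑ y, margSY P (s, y) * Real.logb 2 (margSY P (s, y) / (margS P s * margY P y))

/-- Mutual information `I(S;Z)` (base 2) of the (S,Z)-marginal of `P`. -/
noncomputable def miSZ (P : S × Y × Z → ℝ) : ℝ :=
  ∑ s, ∑ z, margSZ P (s, z) * Real.logb 2 (margSZ P (s, z) / (margS P s * margZ P z))

/-- Conditional mutual information `I(S;Y|Z)` (base 2) under `P`. -/
noncomputable def condMI (P : S × Y × Z → ℝ) : ℝ :=
  ∑ s, ∑ y, ∑ z,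
    P (s, y, z) * Real.logb 2 (P (s, y, z) * margZ P z / (margSZ P (s, z) * margYZ P (y, z)))

/-- The feasible set `Δ_P`: joint distributions with the same (S,Y)- and (S,Z)-marginals as `P`. -/
def marginalPolytope (P : S × Y × Z → ℝ) : Set (S × Y × Z → ℝ) :=
  {Q | IsDist Q ∧ margSY Q = margSY P ∧ margSZ Q = margSZ P}

/-- Minimum-synergy unique information `UI(S;Y\Z) = inf_{Q ∈ Δ_P} I_Q(S;Y|Z)`. -/
noncomputable def UI (P : S × Y × Z → ℝ) : ℝ :=
  sInf (condMI '' marginalPolytope P)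

noncomputable def condYgivenS (P : S × Y × Z → ℝ) : S → Y → ℝ :=
  fun s y => margSY P (s, y) / margS P s
noncomputable def condZgivenS (P : S × Y × Z → ℝ) : S → Z → ℝ :=
  fun s z => margSZ P (s, z) / margS P s
noncomputable def condSgivenY (P : S × Y × Z → ℝ) : Y → S → ℝ :=
  fun y s => margSY P (s, y) / margY P y
noncomputable def condSgivenZ (P : S × Y × Z → ℝ) : Z → S → ℝ :=
  fun z s => margSZ P (s, z) / margZ P z

/-- Weighted input deficiency `δ_i^π(μ̄,κ̄) = inf_{λ̄} ∑_y π_Y(y) D(κ̄_y ∥ (μ̄∘λ̄)_y)`. -/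
noncomputable def defIn {Y' Z' S' : Type*} [Fintype Y'] [Fintype Z'] [Fintype S']
    (piY : Y' → ℝ) (mub : Z' → S' → ℝ) (kab : Y' → S' → ℝ) : ℝ :=
  sInf {d | ∃ lb : Y' → Z' → ℝ, IsChannel lb ∧
    d = ∑ y, piY y * klDiv2 (kab y) (chComp mub lb y)}

end Joint

/-!
Write `W = f S`. Since `W` is a function of `S`, the chain rule gives
`I(S; Y | Z) = I(W; Y | Z) + I(S; Y | Z, W)`, and `I(S; Y | Z, W) = I(S; Y W | Z W)` because `W`
is already on the conditioning side. Hence appending `f S` to both observations can only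
decrease the conditional mutual information of every `Q ∈ Δ_P`, and the lift of such a `Q`
lies in the feasible set of the lifted distribution.
-/

theorem mul_log_div_le_sub {p q : ℝ} (hp : 0 ≤ p) (hq : 0 ≤ q) (hpq : 0 < p → 0 < q) :
    p * log (q / p) ≤ q - p := by
  rcases hp.eq_or_lt with rfl | hp
  · simpa using hq
  · calc p * log (q / p) ≤ p * (q / p - 1) := by
          gcongr; exact log_le_sub_one_of_pos (div_pos (hpq hp) hp)
      _ = q - p := by field_simp

theorem sum_mul_logb_div_nonpos {ι : Type*} [Fintype ι] {p q : ι → ℝ} (hp : 0 ≤ p)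
    (hq : 0 ≤ q) (hpq : ∀ i, 0 < p i → 0 < q i) (hsum : ∑ i, q i ≤ ∑ i, p i) :
    ∑ i, p i * logb 2 (q i / p i) ≤ 0 := by
  have hlog : ∑ i, p i * log (q i / p i) ≤ 0 := calc
    _ ≤ ∑ i, (q i - p i) := sum_le_sum fun i _ => mul_log_div_le_sub (hp i) (hq i) (hpq i)
    _ ≤ 0 := by rw [sum_sub_distrib]; linarith
  simp_rw [logb, mul_div_assoc', ← sum_div]
  exact div_nonpos_of_nonpos_of_nonneg hlog (log_nonneg one_le_two)

section Marginals

variable {S Y Z : Type*} {Q : S × Y × Z → ℝ}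

theorem margSZ_nonneg [Fintype Y] (hQ : 0 ≤ Q) (p : S × Z) : 0 ≤ margSZ Q p :=
  sum_nonneg fun _ _ => hQ _

theorem margYZ_nonneg [Fintype S] (hQ : 0 ≤ Q) (p : Y × Z) : 0 ≤ margYZ Q p :=
  sum_nonneg fun _ _ => hQ _

theorem margZ_nonneg [Fintype S] [Fintype Y] (hQ : 0 ≤ Q) (z : Z) : 0 ≤ margZ Q z :=
  sum_nonneg fun _ _ => sum_nonneg fun _ _ => hQ _

theorem le_margSZ [Fintype Y] (hQ : 0 ≤ Q) (s : S) (y : Y) (z : Z) :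
    Q (s, y, z) ≤ margSZ Q (s, z) :=
  single_le_sum (fun y _ => hQ (s, y, z)) (mem_univ y)

theorem le_margYZ [Fintype S] (hQ : 0 ≤ Q) (s : S) (y : Y) (z : Z) :
    Q (s, y, z) ≤ margYZ Q (y, z) :=
  single_le_sum (fun s _ => hQ (s, y, z)) (mem_univ s)

theorem margSZ_le_margZ [Fintype S] [Fintype Y] (hQ : 0 ≤ Q) (s : S) (z : Z) :
    margSZ Q (s, z) ≤ margZ Q z :=
  single_le_sum (f := fun s => margSZ Q (s, z)) (fun s _ => sum_nonneg fun y _ => hQ (s, y, z))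
    (mem_univ s)

theorem condMI_eq_sum [Fintype S] [Fintype Y] [Fintype Z] (Q : S × Y × Z → ℝ) :
    condMI Q = ∑ p, Q p *
      logb 2 (Q p * margZ Q p.2.2 / (margSZ Q (p.1, p.2.2) * margYZ Q (p.2.1, p.2.2))) := by
  simp only [condMI, Fintype.sum_prod_type]

theorem sum_margSZ_mul_margYZ_div_margZ [Fintype S] [Fintype Y] [Fintype Z]
    (Q : S × Y × Z → ℝ) :
    ∑ p : S × Y × Z, margSZ Q (p.1, p.2.2) * margYZ Q (p.2.1, p.2.2) / margZ Q p.2.2 =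
      ∑ p, Q p := by
  have hZ (z : Z) : ∑ s, ∑ y, margSZ Q (s, z) * margYZ Q (y, z) / margZ Q z = margZ Q z := by
    have hYZ : ∑ y, margYZ Q (y, z) = margZ Q z := sum_comm
    simp_rw [← sum_div, ← sum_mul_sum, hYZ]
    exact mul_self_div_self _
  calc _ = ∑ z, ∑ s, ∑ y, margSZ Q (s, z) * margYZ Q (y, z) / margZ Q z := by
        simp only [Fintype.sum_prod_type]
        exact sum_comm_cycle
    _ = ∑ z, margZ Q z := by simp_rw [hZ]
    _ = ∑ p, Q p := by
        simp only [margZ, Fintype.sum_prod_type]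
        exact sum_comm_cycle.symm

theorem condMI_nonneg [Fintype S] [Fintype Y] [Fintype Z] (hQ : 0 ≤ Q) : 0 ≤ condMI Q := by
  -- `condMI Q` is the divergence of `Q` from this coupling, under which `S` and `Y` are
  -- conditionally independent given `Z`.
  set q : S × Y × Z → ℝ :=
    fun p => margSZ Q (p.1, p.2.2) * margYZ Q (p.2.1, p.2.2) / margZ Q p.2.2
  have hq : 0 ≤ q := fun p =>
    div_nonneg (mul_nonneg (margSZ_nonneg hQ _) (margYZ_nonneg hQ _)) (margZ_nonneg hQ _)
  have hQq (p) (hp : 0 < Q p) : 0 < q p := by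
    obtain ⟨s, y, z⟩ := p
    have hSZ := hp.trans_le (le_margSZ hQ s y z)
    have hYZ := hp.trans_le (le_margYZ hQ s y z)
    have hZ := hSZ.trans_le (margSZ_le_margZ hQ s z)
    positivity
  have hgibbs := sum_mul_logb_div_nonpos hQ hq hQq (sum_margSZ_mul_margYZ_div_margZ Q).le
  rw [condMI_eq_sum, ← neg_nonpos, ← sum_neg_distrib]
  convert hgibbs using 3 with p
  rw [← mul_neg, ← logb_inv, inv_div, div_div, mul_comm (margZ Q _)]

end Marginals

section PublicCommunication

variable {S Y Z W : Type*} {Q : S × Y × Z → ℝ}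

def liftPublic [DecidableEq W] (f : S → W) (Q : S × Y × Z → ℝ) :
    S × (Y × W) × (Z × W) → ℝ :=
  fun p => if p.2.1.2 = f p.1 ∧ p.2.2.2 = f p.1 then Q (p.1, p.2.1.1, p.2.2.1) else 0

def mapFst [Fintype S] [DecidableEq W] (f : S → W) (Q : S × Y × Z → ℝ) :
    W × Y × Z → ℝ :=
  fun p => ∑ s, if f s = p.1 then Q (s, p.2.1, p.2.2) else 0

variable [DecidableEq W] (f : S → W)

theorem sum_liftPublic_mul [Fintype S] [Fintype Y] [Fintype Z] [Fintype W]
    (g : S × (Y × W) × (Z × W) → ℝ) :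
    ∑ p, liftPublic f Q p * g p = ∑ p, Q p * g (p.1, (p.2.1, f p.1), (p.2.2, f p.1)) := by
  simp [liftPublic, Fintype.sum_prod_type, ite_and]

theorem isDist_liftPublic [Fintype S] [Fintype Y] [Fintype Z] [Fintype W] (hQ : IsDist Q) :
    IsDist (liftPublic f Q) := by
  refine ⟨fun p => ?_, by simpa [hQ.2] using sum_liftPublic_mul f (Q := Q) 1⟩
  unfold liftPublic
  split_ifs
  exacts [hQ.1 _, le_rfl]

theorem margSY_liftPublic [Fintype Z] [Fintype W] (s : S) (y : Y) (w : W) :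
    margSY (liftPublic f Q) (s, (y, w)) = if w = f s then margSY Q (s, y) else 0 := by
  by_cases h : w = f s <;> simp [margSY, liftPublic, Fintype.sum_prod_type, h]

theorem margSZ_liftPublic [Fintype Y] [Fintype W] (s : S) (z : Z) (w : W) :
    margSZ (liftPublic f Q) (s, (z, w)) = if w = f s then margSZ Q (s, z) else 0 := by
  by_cases h : w = f s <;> simp [margSZ, liftPublic, Fintype.sum_prod_type, h]

theorem margYZ_liftPublic [Fintype S] (y : Y) (z : Z) (w : W) :
    margYZ (liftPublic f Q) ((y, w), (z, w)) = mapFst f Q (w, y, z) := by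
  simp [margYZ, liftPublic, mapFst, eq_comm]

theorem margZ_liftPublic [Fintype S] [Fintype Y] [Fintype W] (z : Z) (w : W) :
    margZ (liftPublic f Q) (z, w) = margSZ (mapFst f Q) (w, z) := by
  simp only [margSZ, mapFst]
  rw [sum_comm]
  simp [margZ, liftPublic, Fintype.sum_prod_type, ite_and, eq_comm]

theorem liftPublic_mem_marginalPolytope [Fintype S] [Fintype Y] [Fintype Z] [Fintype W]
    {P : S × Y × Z → ℝ} (hQ : Q ∈ marginalPolytope P) :
    liftPublic f Q ∈ marginalPolytope (liftPublic f P) := by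
  obtain ⟨hQ, hSY, hSZ⟩ := hQ
  refine ⟨isDist_liftPublic f hQ, ?_, ?_⟩
  · ext ⟨s, y, w⟩
    simp only [margSY_liftPublic, hSY]
  · ext ⟨s, z, w⟩
    simp only [margSZ_liftPublic, hSZ]

theorem mapFst_nonneg [Fintype S] (hQ : 0 ≤ Q) : 0 ≤ mapFst f Q := fun _ =>
  sum_nonneg fun s _ => by split_ifs; exacts [hQ _, le_rfl]

theorem le_mapFst [Fintype S] (hQ : 0 ≤ Q) (s : S) (y : Y) (z : Z) :
    Q (s, y, z) ≤ mapFst f Q (f s, y, z) := by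
  simpa [mapFst] using single_le_sum (f := fun s' => if f s' = f s then Q (s', y, z) else 0)
    (fun s' _ => by split_ifs; exacts [hQ _, le_rfl]) (mem_univ s)

theorem sum_mapFst_mul [Fintype S] [Fintype Y] [Fintype Z] [Fintype W] (g : W × Y × Z → ℝ) :
    ∑ p, mapFst f Q p * g p = ∑ p, Q p * g (f p.1, p.2) := by
  simp only [mapFst, sum_mul, ite_mul, zero_mul]
  rw [sum_comm, Fintype.sum_prod_type]
  refine sum_congr rfl fun s _ => ?_
  rw [Fintype.sum_prod_type]
  simp

theorem margYZ_mapFst [Fintype S] [Fintype W] : margYZ (mapFst f Q) = margYZ Q := by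
  ext ⟨y, z⟩
  simp only [margYZ, mapFst]
  rw [sum_comm]
  simp

theorem margZ_mapFst [Fintype S] [Fintype Y] [Fintype W] : margZ (mapFst f Q) = margZ Q := by
  ext z
  simp only [margZ, mapFst]
  rw [sum_comm_cycle]
  simp

theorem condMI_liftPublic [Fintype S] [Fintype Y] [Fintype Z] [Fintype W] :
    condMI (liftPublic f Q) = ∑ p, Q p * logb 2 (Q p * margSZ (mapFst f Q) (f p.1, p.2.2) /
      (margSZ Q (p.1, p.2.2) * mapFst f Q (f p.1, p.2))) := by
  rw [condMI_eq_sum, sum_liftPublic_mul]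
  simp [liftPublic, margZ_liftPublic, margSZ_liftPublic, margYZ_liftPublic]

theorem condMI_mapFst [Fintype S] [Fintype Y] [Fintype Z] [Fintype W] :
    condMI (mapFst f Q) = ∑ p, Q p * logb 2 (mapFst f Q (f p.1, p.2) * margZ Q p.2.2 /
      (margSZ (mapFst f Q) (f p.1, p.2.2) * margYZ Q p.2)) := by
  rw [condMI_eq_sum, sum_mapFst_mul, margZ_mapFst, margYZ_mapFst]

/-- The chain rule `I(S; Y W | Z W) + I(W; Y | Z) = I(S; Y | Z)` for `W = f S`. -/
theorem condMI_liftPublic_add_condMI_mapFst [Fintype S] [Fintype Y] [Fintype Z] [Fintype W]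
    (hQ : 0 ≤ Q) : condMI (liftPublic f Q) + condMI (mapFst f Q) = condMI Q := by
  rw [condMI_liftPublic, condMI_mapFst, condMI_eq_sum Q, ← sum_add_distrib]
  refine sum_congr rfl fun ⟨s, y, z⟩ _ => ?_
  rcases (show 0 ≤ Q (s, y, z) from hQ _).eq_or_lt with h | h
  · simp [← h]
  have hSZ := h.trans_le (le_margSZ hQ s y z)
  have hR := h.trans_le (le_mapFst f hQ s y z)
  have hRSZ := hR.trans_le (le_margSZ (mapFst_nonneg f hQ) (f s) y z)
  have hYZ := h.trans_le (le_margYZ hQ s y z)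
  have hZ := hSZ.trans_le (margSZ_le_margZ hQ s z)
  rw [← mul_add, ← logb_mul (by positivity) (by positivity)]
  congr 2
  field_simp

theorem condMI_liftPublic_le [Fintype S] [Fintype Y] [Fintype Z] [Fintype W] (hQ : 0 ≤ Q) :
    condMI (liftPublic f Q) ≤ condMI Q := by
  rw [← condMI_liftPublic_add_condMI_mapFst f hQ]
  exact le_add_of_nonneg_right (condMI_nonneg (mapFst_nonneg f hQ))

end PublicCommunication

theorem UI_le_condMI {S Y Z : Type*} [Fintype S] [Fintype Y] [Fintype Z] {P Q : S × Y × Z → ℝ}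
    (hQ : Q ∈ marginalPolytope P) : UI P ≤ condMI Q :=
  csInf_le ⟨0, by rintro _ ⟨R, hR, rfl⟩; exact condMI_nonneg hR.1.1⟩ ⟨Q, hQ, rfl⟩

/-- monotonicity of `UI` under one-way public communication:
`UI(S;(Y,f(S))\(Z,f(S))) ≤ UI(S;Y\Z)`. -/
theorem UI_mono_public_communication
    {S Y Z W : Type*} [Fintype S] [Fintype Y] [Fintype Z] [Fintype W] [DecidableEq W]
    (P : S × Y × Z → ℝ) (hP : IsDist P) (f : S → W) :
    UI (fun p : S × (Y × W) × (Z × W) =>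
        if p.2.1.2 = f p.1 ∧ p.2.2.2 = f p.1 then P (p.1, p.2.1.1, p.2.2.1) else 0) ≤
      UI P := by
  refine le_csInf ⟨condMI P, P, ⟨hP, rfl, rfl⟩, rfl⟩ ?_
  rintro _ ⟨Q, hQ, rfl⟩
  exact (UI_le_condMI (liftPublic_mem_marginalPolytope f hQ)).trans (condMI_liftPublic_le f hQ.1.1)
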